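/- For every ε > 0 there exists an instance I of Borda shift bribery such that the solution output by the single-pass greedy algorithm G has cost at least (2 − ε) times the cost of the solution output by the two-pass algorithm A; specifically, for k = ⌈1/ε⌉ and T = 2k, the instance I_k has opt(I_k) = 2kT achieved by A, while G outputs a solution of cost 4kT − 3k, and 4kT − 3k > (2 − ε)·2kT. -/

import Mathlib

/-- Shift the designated candidate `p` up by one position in the vote `v`
(a vote is a bijection from candidates to positions; position 0 is the top). -/
def shiftOne {C : Type*} [DecidableEq C] {m : ℕ} (p : C) (v : C ≃ Fin m) : C ≃ Fin m :=
  if h : ((v p : ℕ) = 0) then v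
  else (Equiv.swap p (v.symm ⟨(v p : ℕ) - 1, lt_of_le_of_lt (Nat.sub_le _ _) (v p).isLt⟩)).trans v

/-- Shift `p` upwards by `t` positions in the vote `v` (capping at the top). -/
def shiftVote {C : Type*} [DecidableEq C] {m : ℕ} (p : C) (t : ℕ) (v : C ≃ Fin m) :
    C ≃ Fin m := (shiftOne p)^[t] v

/-- Apply a shift-action `t = (t₁,…,t_n)` to an election: shift `p` upwards by
`t i` positions in the `i`-th vote. -/
def shf {C : Type*} [DecidableEq C] {m n : ℕ} (p : C) (votes : Fin n → C ≃ Fin m)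
    (t : Fin n → ℕ) : Fin n → C ≃ Fin m :=
  fun i => shiftVote p (t i) (votes i)

/-- The score of candidate `x` under the scoring vector `α`. -/
def score {C : Type*} [Fintype C] [DecidableEq C] {m n : ℕ} (α : Fin m → ℤ)
    (votes : Fin n → C ≃ Fin m) (x : C) : ℤ := ∑ i, α (votes i x)

/-- `p` is a winner of the election under the scoring vector `α`. -/
def winner {C : Type*} [Fintype C] [DecidableEq C] {m n : ℕ} (α : Fin m → ℤ)
    (votes : Fin n → C ≃ Fin m) (p : C) : Prop :=
  ∀ x, score α votes x ≤ score α votes p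


/-!
In the instance `p` trails `c` by two Borda points. A single shift of `p` in vote `1`, where `c`
sits directly above `p`, costs `4k² = 2kT`, takes a point from `c` and makes `p` win; every other
winning action shifts `p` in a vote priced `8k²`, so `4k²` is optimal. Below the budget `8k² − 3k`
the greedy first pass never wins: a winning purchase must contain the shift in vote `1`, and if it
does not also contain the shift in vote `0` (price `4k² − 3k`, where `p` only overtakes a dummy),
then the shift in vote `0` alone raises `p`'s score as much and is cheaper. At budget `8k² − 3k`
the greedy pass buys both shifts and wins, at cost `8k² − 3k = 4kT − 3k`.
-/

section Shift

variable {C : Type*} [DecidableEq C] {m : ℕ}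

lemma shiftOne_apply_self (p : C) (v : C ≃ Fin m) :
    (shiftOne p v p : ℕ) = v p - 1 := by
  unfold shiftOne
  split
  · omega
  · simp

lemma shiftOne_apply_of_ne {p x : C} (hx : x ≠ p) (v : C ≃ Fin m) :
    (shiftOne p v x : ℕ) = if (v x : ℕ) + 1 = v p then (v p : ℕ) else v x := by
  unfold shiftOne
  split
  · rw [if_neg (by omega)]
  · rw [Equiv.trans_apply]
    by_cases hq : x = v.symm ⟨(v p : ℕ) - 1, lt_of_le_of_lt (Nat.sub_le _ _) (v p).isLt⟩
    · have hvx : (v x : ℕ) = v p - 1 := by simp [hq]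
      rw [if_pos (by omega), hq, Equiv.swap_apply_right]
    · have hvx : (v x : ℕ) ≠ v p - 1 := fun h => hq (v.injective (by simp [Fin.ext_iff, h]))
      rw [if_neg (by omega), Equiv.swap_apply_of_ne_of_ne hx hq]

lemma shiftVote_succ (p : C) (t : ℕ) (v : C ≃ Fin m) :
    shiftVote p (t + 1) v = shiftOne p (shiftVote p t v) :=
  Function.iterate_succ_apply' _ _ _

lemma shiftVote_apply_self (p : C) (t : ℕ) (v : C ≃ Fin m) :
    (shiftVote p t v p : ℕ) = v p - t := by
  induction t with
  | zero => rfl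
  | succ n ih => rw [shiftVote_succ, shiftOne_apply_self, ih]; omega

lemma shiftVote_apply_of_lt {p x : C} (t : ℕ) {v : C ≃ Fin m} (hx : (v p : ℕ) < v x) :
    (shiftVote p t v x : ℕ) = v x := by
  have hxp : x ≠ p := by rintro rfl; omega
  induction t with
  | zero => rfl
  | succ n ih =>
    have := shiftVote_apply_self p n v
    rw [shiftVote_succ, shiftOne_apply_of_ne hxp]
    simp only [ih, this]
    split_ifs <;> omega

lemma shiftVote_apply_of_eq_zero {p x : C} (t : ℕ) {v : C ≃ Fin m} (hx : (v x : ℕ) = 0)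
    (hp : 0 < (v p : ℕ)) : (shiftVote p t v x : ℕ) = if (v p : ℕ) ≤ t then 1 else 0 := by
  have hxp : x ≠ p := by rintro rfl; omega
  induction t with
  | zero => rw [if_neg (by omega)]; exact hx
  | succ n ih =>
    have := shiftVote_apply_self p n v
    rw [shiftVote_succ, shiftOne_apply_of_ne hxp]
    simp only [ih, this]
    split_ifs <;> omega

lemma le_shiftVote_apply {p x : C} (hx : x ≠ p) (t : ℕ) (v : C ≃ Fin m) :
    (v x : ℕ) ≤ shiftVote p t v x := by
  induction t with
  | zero => exact le_rfl
  | succ n ih =>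
    rw [shiftVote_succ, shiftOne_apply_of_ne hx]
    split_ifs <;> omega

end Shift

section Borda

variable {C : Type*} [Fintype C] [DecidableEq C] {m n : ℕ}

def borda (a : ℤ) (j : Fin m) : ℤ := a - (j : ℕ)

def rankSum (votes : Fin n → C ≃ Fin m) (x : C) : ℕ := ∑ i, (votes i x : ℕ)

lemma score_borda (a : ℤ) (votes : Fin n → C ≃ Fin m) (x : C) :
    score (borda a) votes x = n * a - rankSum votes x := by
  simp [score, borda, rankSum, Finset.sum_sub_distrib]

lemma score_borda_le_iff (a : ℤ) {V W : Fin n → C ≃ Fin m} {x y : C} :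
    score (borda a) V x ≤ score (borda a) W y ↔ rankSum W y ≤ rankSum V x := by
  rw [score_borda, score_borda]; omega

lemma score_borda_eq_iff (a : ℤ) {V W : Fin n → C ≃ Fin m} {x y : C} :
    score (borda a) V x = score (borda a) W y ↔ rankSum V x = rankSum W y := by
  rw [score_borda, score_borda]; omega

lemma winner_borda_iff (a : ℤ) (votes : Fin n → C ≃ Fin m) (p : C) :
    winner (borda a) votes p ↔ ∀ x, rankSum votes p ≤ rankSum votes x :=
  forall_congr' fun _ => score_borda_le_iff a

end Borda

lemma two_sub_mul_le {K : Type*} [Field K] [LinearOrder K] [IsStrictOrderedRing K] {ε x : K}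
    (hε : 0 < ε) (hx : 1 / ε ≤ x) : (2 - ε) * (4 * x ^ 2) ≤ 8 * x ^ 2 - 3 * x := by
  have hx0 : 0 ≤ x := le_trans (by positivity) hx
  have hεx : 1 ≤ ε * x := by rwa [div_le_iff₀ hε, mul_comm] at hx
  nlinarith

namespace Ik

open Equiv Finset

variable {k : ℕ}

/-- Candidate `0` is `p` and candidate `1` is `c`. Vote `0` ranks `2 ≻ p ≻ c`, vote `1` ranks
`c ≻ p`, the last vote ranks `c` first and `p` last, and every other vote ranks `p ≻ c ≻ ⋯`. -/
def votes (k : ℕ) (v : Fin (4 * k + 2)) : Fin (4 * k + 2) ≃ Fin (4 * k + 2) :=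
  if v = 0 then (swap 1 2).trans (swap 0 1)
  else if v = 1 then swap 0 1
  else if v = Fin.last _ then (swap 0 1).trans (swap 1 (Fin.last _))
  else Equiv.refl _

def rest (k : ℕ) : Finset (Fin (4 * k + 2)) := {0, 1, Fin.last _}ᶜ

lemma mem_rest {v : Fin (4 * k + 2)} : v ∈ rest k ↔ v ≠ 0 ∧ v ≠ 1 ∧ v ≠ Fin.last _ := by
  simp [rest]

lemma one_ne_last (hk : 1 ≤ k) : (1 : Fin (4 * k + 2)) ≠ Fin.last _ := by
  simp [Fin.ext_iff]; omega

lemma card_rest (hk : 1 ≤ k) : #(rest k) = 4 * k - 1 := by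
  rw [rest, card_compl, card_insert_of_notMem (by simp [Fin.ext_iff]),
    card_pair (one_ne_last hk), Fintype.card_fin]
  omega

lemma sum_eq_add_sum_rest {M : Type*} [AddCommMonoid M] (hk : 1 ≤ k) (f : Fin (4 * k + 2) → M) :
    ∑ v, f v = f 0 + f 1 + f (Fin.last _) + ∑ v ∈ rest k, f v := by
  rw [← sum_add_sum_compl {0, 1, Fin.last _} f, sum_insert (by simp [Fin.ext_iff]),
    sum_pair (one_ne_last hk), rest]
  simp only [add_assoc]

lemma votes_zero : votes k 0 = (swap 1 2).trans (swap 0 1) := by simp [votes]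

lemma votes_one : votes k 1 = swap 0 1 := by simp [votes]

lemma votes_last (hk : 1 ≤ k) :
    votes k (Fin.last _) = (swap 0 1).trans (swap 1 (Fin.last _)) := by
  simp [votes, Fin.ext_iff]; omega

lemma votes_of_mem_rest {v : Fin (4 * k + 2)} (hv : v ∈ rest k) : votes k v = Equiv.refl _ := by
  rw [mem_rest] at hv
  simp [votes, hv]

lemma votes_apply_of_two_le {v x : Fin (4 * k + 2)} (hv0 : v ≠ 0) (hvl : v ≠ Fin.last _)
    (hx : 2 ≤ (x : ℕ)) : votes k v x = x := by
  have hx0 : x ≠ 0 := by rintro rfl; simp at hx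
  have hx1 : x ≠ 1 := by rintro rfl; simp at hx
  simp only [votes, hv0, ↓reduceIte, hvl]
  split_ifs <;> simp [swap_apply_of_ne_of_ne hx0 hx1]

def rank (k : ℕ) (t : Fin (4 * k + 2) → ℕ) (x : Fin (4 * k + 2)) : ℕ :=
  rankSum (shf 0 (votes k) t) x

lemma rank_zero (hk : 1 ≤ k) (t : Fin (4 * k + 2) → ℕ) :
    rank k t 0 = (1 - t 0) + (1 - t 1) + (4 * k + 1 - t (Fin.last _)) := by
  simp only [rank, rankSum, shf, shiftVote_apply_self]
  rw [sum_eq_add_sum_rest hk, sum_eq_zero fun v hv => by simp [votes_of_mem_rest hv]]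
  simp [votes_zero, votes_one, votes_last hk, swap_apply_def, Fin.ext_iff,
    Nat.mod_eq_of_lt (show 2 < 4 * k + 2 by omega)]

lemma rank_one (hk : 1 ≤ k) (t : Fin (4 * k + 2) → ℕ) :
    rank k t 1 = 4 * k + 1 + (if 1 ≤ t 1 then 1 else 0)
      + (if 4 * k + 1 ≤ t (Fin.last _) then 1 else 0) := by
  have h2 : 2 % (4 * k + 2) = 2 := Nat.mod_eq_of_lt (by omega)
  simp only [rank, rankSum, shf]
  rw [sum_eq_add_sum_rest hk, sum_congr rfl fun v hv => by
    rw [votes_of_mem_rest hv, shiftVote_apply_of_lt _ (by simp)]]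
  rw [shiftVote_apply_of_lt _ (by simp [votes_zero, swap_apply_def, Fin.ext_iff, h2]),
    shiftVote_apply_of_eq_zero _ (by simp [votes_one]) (by simp [votes_one]),
    shiftVote_apply_of_eq_zero _ (by simp [votes_last hk, swap_apply_def, Fin.ext_iff])
      (by simp [votes_last hk])]
  simp only [votes_zero, trans_apply, swap_apply_left, swap_apply_def, Fin.ext_iff,
    Fin.coe_ofNat_eq_mod, h2, Nat.zero_mod, OfNat.ofNat_ne_zero, ↓reduceIte, Nat.one_mod,
    OfNat.ofNat_ne_one, votes_one, votes_last hk, Fin.val_last, Order.add_one_le_iff, refl_apply,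
    sum_const, card_rest hk, smul_eq_mul, mul_one]
  omega

lemma le_rank (hk : 1 ≤ k) (t : Fin (4 * k + 2) → ℕ) {x : Fin (4 * k + 2)} (hx0 : x ≠ 0)
    (hx1 : x ≠ 1) : 8 * k ≤ rank k t x := by
  have hx : 2 ≤ (x : ℕ) := by
    by_contra h
    interval_cases hv : (x : ℕ)
    · exact hx0 (Fin.ext hv)
    · exact hx1 (Fin.ext (by simp [hv]))
  calc 8 * k = #({0, Fin.last _}ᶜ : Finset (Fin (4 * k + 2))) • 2 := by
        rw [card_compl, card_pair (by simp [Fin.ext_iff]), Fintype.card_fin, smul_eq_mul]; omega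
    _ ≤ ∑ v ∈ {0, Fin.last _}ᶜ, (shiftVote 0 (t v) (votes k v) x : ℕ) := by
        refine card_nsmul_le_sum _ _ _ fun v hv => ?_
        simp only [mem_compl, mem_insert, mem_singleton, not_or] at hv
        calc 2 ≤ (votes k v x : ℕ) := by rw [votes_apply_of_two_le hv.1 hv.2 hx]; exact hx
          _ ≤ _ := le_shiftVote_apply hx0 _ _
    _ ≤ rank k t x := sum_le_univ_sum_of_nonneg (by simp)

def Wins (k : ℕ) (t : Fin (4 * k + 2) → ℕ) : Prop :=
  winner (borda (4 * k + 1)) (shf 0 (votes k) t) 0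

lemma wins_iff (hk : 1 ≤ k) (t : Fin (4 * k + 2) → ℕ) : Wins k t ↔ rank k t 0 ≤ rank k t 1 := by
  refine (winner_borda_iff _ _ _).trans ⟨fun h => h 1, fun h x => ?_⟩
  by_cases hx0 : x = 0
  · rw [hx0]
  by_cases hx1 : x = 1
  · rwa [hx1]
  change rank k t 0 ≤ rank k t x
  have := le_rank hk t hx0 hx1
  have := rank_zero hk t
  omega

lemma wins_of_one_le (hk : 1 ≤ k) {t : Fin (4 * k + 2) → ℕ} (h : 1 ≤ t 1) : Wins k t := by
  rw [wins_iff hk, rank_zero hk, rank_one hk, if_pos h]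
  split_ifs <;> omega

lemma one_le_last_of_wins (hk : 1 ≤ k) {t : Fin (4 * k + 2) → ℕ} (hw : Wins k t) (h : t 1 = 0) :
    1 ≤ t (Fin.last _) := by
  rw [wins_iff hk, rank_zero hk, rank_one hk, h] at hw
  split_ifs at hw <;> omega

def unitPrice (k : ℕ) (v : Fin (4 * k + 2)) : ℕ :=
  if v = 0 then 4 * (k * k) - 3 * k else if v = 1 then 4 * (k * k) else 8 * (k * k)

def cost (k : ℕ) (t : Fin (4 * k + 2) → ℕ) : ℕ := ∑ v, unitPrice k v * t v

lemma unitPrice_zero : unitPrice k 0 = 4 * (k * k) - 3 * k := if_pos rfl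

lemma unitPrice_one : unitPrice k 1 = 4 * (k * k) := by simp [unitPrice]

lemma unitPrice_of_ne {v : Fin (4 * k + 2)} (h0 : v ≠ 0) (h1 : v ≠ 1) :
    unitPrice k v = 8 * (k * k) := by simp [unitPrice, h0, h1]

lemma cost_add (s t : Fin (4 * k + 2) → ℕ) : cost k (s + t) = cost k s + cost k t := by
  simp [cost, mul_add, sum_add_distrib]

lemma cost_single (v : Fin (4 * k + 2)) (n : ℕ) : cost k (Pi.single v n) = unitPrice k v * n := by
  simp [cost, Pi.single_apply]

lemma unitPrice_le_cost {t : Fin (4 * k + 2) → ℕ} {v : Fin (4 * k + 2)} (h : 1 ≤ t v) :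
    unitPrice k v ≤ cost k t :=
  calc unitPrice k v ≤ unitPrice k v * t v := Nat.le_mul_of_pos_right _ h
    _ ≤ cost k t := single_le_sum (f := fun v => unitPrice k v * t v) (by simp) (mem_univ v)

lemma unitPrice_add_le_cost {t : Fin (4 * k + 2) → ℕ} (h0 : 1 ≤ t 0) (h1 : 1 ≤ t 1) :
    unitPrice k 0 + unitPrice k 1 ≤ cost k t :=
  calc unitPrice k 0 + unitPrice k 1 ≤ unitPrice k 0 * t 0 + unitPrice k 1 * t 1 :=
        add_le_add (Nat.le_mul_of_pos_right _ h0) (Nat.le_mul_of_pos_right _ h1)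
    _ = ∑ v ∈ {0, 1}, unitPrice k v * t v :=
        (sum_pair (f := fun v => unitPrice k v * t v) zero_ne_one).symm
    _ ≤ cost k t := sum_le_univ_sum_of_nonneg (by simp)

lemma eq_zero_of_cost_lt {t : Fin (4 * k + 2) → ℕ} (hc : cost k t < 8 * (k * k))
    {v : Fin (4 * k + 2)} (h0 : v ≠ 0) (h1 : v ≠ 1) : t v = 0 := by
  by_contra h
  have := unitPrice_le_cost (k := k) (Nat.one_le_iff_ne_zero.2 h)
  rw [unitPrice_of_ne h0 h1] at this
  omega

lemma unitPrice_zero_lt_one (hk : 1 ≤ k) : unitPrice k 0 < unitPrice k 1 := by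
  have : k ≤ k * k := Nat.le_mul_self k
  rw [unitPrice_zero, unitPrice_one]
  omega

lemma unitPrice_add (hk : 1 ≤ k) : unitPrice k 0 + unitPrice k 1 = 8 * (k * k) - 3 * k := by
  have : k ≤ k * k := Nat.le_mul_self k
  rw [unitPrice_zero, unitPrice_one]
  omega

lemma unitPrice_add_lt (hk : 1 ≤ k) : unitPrice k 0 + unitPrice k 1 < 8 * (k * k) := by
  have : k ≤ k * k := Nat.le_mul_self k
  rw [unitPrice_add hk]
  omega

lemma last_ne_zero : Fin.last (4 * k + 1) ≠ 0 := by simp [Fin.ext_iff]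

lemma isLeast_cost_wins (hk : 1 ≤ k) :
    IsLeast {b | ∃ t, Wins k t ∧ b = cost k t} (4 * (k * k)) := by
  refine ⟨⟨Pi.single 1 1, wins_of_one_le hk (by simp), by simp [cost_single, unitPrice_one]⟩, ?_⟩
  rintro b ⟨t, hw, rfl⟩
  by_cases h1 : 1 ≤ t 1
  · simpa [unitPrice_one] using unitPrice_le_cost (k := k) h1
  · have := unitPrice_le_cost (one_le_last_of_wins hk hw (by omega))
    rw [unitPrice_of_ne last_ne_zero (one_ne_last hk).symm] at this
    omega

lemma not_wins_of_cheapest (hk : 1 ≤ k) {ℓ : ℕ} (hℓ : ℓ < unitPrice k 0 + unitPrice k 1)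
    {w : Fin (4 * k + 2) → ℕ} (hw : cost k w ≤ ℓ)
    (hcheap : ∀ w', cost k w' ≤ ℓ → rank k w' 0 = rank k w 0 → cost k w ≤ cost k w') :
    ¬ Wins k w := by
  intro hwin
  have hlast : w (Fin.last _) = 0 :=
    eq_zero_of_cost_lt (by have := unitPrice_add_lt hk; omega) last_ne_zero (one_ne_last hk).symm
  have h1 : 1 ≤ w 1 := by
    by_contra h
    have := one_le_last_of_wins hk hwin (by omega)
    omega
  have h0 : w 0 = 0 := by
    by_contra h
    have := unitPrice_add_le_cost (Nat.one_le_iff_ne_zero.2 h) h1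
    omega
  -- a single shift in vote `0` gains `p` as much as `w` does, and it is cheaper
  have h1c := unitPrice_le_cost (k := k) h1
  have hlt := unitPrice_zero_lt_one hk
  have := hcheap (Pi.single 0 1) (by rw [cost_single, mul_one]; omega)
    (by simp [rank_zero hk, h0, hlast]; omega)
  rw [cost_single, mul_one] at this
  omega

lemma cost_eq_and_wins_of_best (hk : 1 ≤ k) {w : Fin (4 * k + 2) → ℕ}
    (hw : cost k w ≤ unitPrice k 0 + unitPrice k 1)
    (hbest : ∀ w', cost k w' ≤ unitPrice k 0 + unitPrice k 1 → rank k w 0 ≤ rank k w' 0) :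
    cost k w = unitPrice k 0 + unitPrice k 1 ∧ Wins k w := by
  have hlast : w (Fin.last _) = 0 :=
    eq_zero_of_cost_lt (by have := unitPrice_add_lt hk; omega) last_ne_zero (one_ne_last hk).symm
  have hpair := hbest (Pi.single 0 1 + Pi.single 1 1) (by simp [cost_add, cost_single])
  simp only [rank_zero hk, hlast, tsub_zero, Pi.add_apply, Pi.single_eq_same, ne_eq, zero_ne_one,
    not_false_eq_true, Pi.single_eq_of_ne, add_zero, tsub_self, one_ne_zero, zero_add,
    Fin.last_eq_zero_iff, Nat.add_eq_zero_iff, mul_eq_zero, OfNat.ofNat_ne_zero, false_or,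
    and_false] at hpair
  have h0 : 1 ≤ w 0 := by omega
  have h1 : 1 ≤ w 1 := by omega
  exact ⟨le_antisymm hw (unitPrice_add_le_cost h0 h1), wins_of_one_le hk h1⟩

lemma cost_greedy (hk : 1 ≤ k) (buy : ℕ → Fin (4 * k + 2) → ℕ) (hcost : ∀ ℓ, cost k (buy ℓ) ≤ ℓ)
    (hbest : ∀ ℓ w, cost k w ≤ ℓ → rank k (buy ℓ) 0 ≤ rank k w 0)
    (hcheap : ∀ ℓ w, cost k w ≤ ℓ → rank k w 0 = rank k (buy ℓ) 0 → cost k (buy ℓ) ≤ cost k w) :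
    cost k (buy (sInf {ℓ | Wins k (buy ℓ)})) = unitPrice k 0 + unitPrice k 1 := by
  obtain ⟨hL, hwin⟩ := cost_eq_and_wins_of_best hk (hcost _) (hbest _)
  have : IsLeast {ℓ | Wins k (buy ℓ)} (unitPrice k 0 + unitPrice k 1) :=
    ⟨hwin, fun ℓ hℓ => not_lt.1 fun h => not_wins_of_cheapest hk h (hcost ℓ) (hcheap ℓ) hℓ⟩
  rw [this.csInf_eq, hL]

end Ik

/-- for every `ε > 0` there is an instance of Borda shift
bribery (the instance `I_k` with `k = ⌈1/ε⌉`, `T = 2k`) on which the two-pass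
algorithm `A` attains the optimum `2kT`, while the single-pass greedy algorithm
`G` — run with any subroutine `buy2` that, given an already applied shift-action
`u` and a budget `ℓ`, returns a cheapest residual-cost shift-action of cost at
most `ℓ` maximizing `p`'s score — outputs a solution of cost `4kT − 3k`, which
is at least `(2 − ε)` times the optimum. -/
theorem stmt17 (ε : ℚ) (hε : 0 < ε) :
    ∃ k T : ℕ, (k : ℤ) = ⌈1 / ε⌉ ∧ T = 2 * k ∧
    ∃ (votes : Fin (4 * k + 2) → (Fin (4 * k + 2) ≃ Fin (4 * k + 2)))
      (π : Fin (4 * k + 2) → ℕ → ℕ) (p : Fin (4 * k + 2)),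
      (∀ v, π v 0 = 0) ∧ (∀ v, Monotone (π v)) ∧
      (let Sc : (Fin (4 * k + 2) → ℕ) → Fin (4 * k + 2) → ℤ := fun t x =>
         ∑ v, ((4 * k + 1 : ℤ) - ((shiftVote p (t v) (votes v) x : Fin (4 * k + 2)) : ℕ))
       let win : (Fin (4 * k + 2) → ℕ) → Prop := fun t => ∀ x, Sc t x ≤ Sc t p
       let cost : (Fin (4 * k + 2) → ℕ) → ℕ := fun t => ∑ v, π v (t v)
       let rcost : (Fin (4 * k + 2) → ℕ) → (Fin (4 * k + 2) → ℕ) → ℕ := fun u w =>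
         ∑ v, (π v (w v + u v) - π v (u v))
       -- the optimum cost is 2kT, and algorithm A attains it
       IsLeast {b : ℕ | ∃ t, win t ∧ b = cost t} (2 * k * T) ∧
       -- any run of the greedy algorithm G outputs a solution of cost 4kT − 3k
       (∀ buy2 : (Fin (4 * k + 2) → ℕ) → ℕ → (Fin (4 * k + 2) → ℕ),
         (∀ u ℓ, rcost u (buy2 u ℓ) ≤ ℓ ∧
           (∀ w, rcost u w ≤ ℓ →
             Sc (fun v => u v + w v) p ≤ Sc (fun v => u v + buy2 u ℓ v) p) ∧
           (∀ w, rcost u w ≤ ℓ →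
             Sc (fun v => u v + w v) p = Sc (fun v => u v + buy2 u ℓ v) p →
             rcost u (buy2 u ℓ) ≤ rcost u w)) →
         cost (buy2 (fun _ => 0) (sInf {ℓ : ℕ | win (buy2 (fun _ => 0) ℓ)})) =
           4 * k * T - 3 * k) ∧
       -- G's solution costs at least (2 − ε) times A's solution
       (((4 * k * T - 3 * k : ℕ) : ℚ) ≥ (2 - ε) * ((2 * k * T : ℕ) : ℚ))) := by
  obtain ⟨k, hk⟩ : ∃ k : ℕ, (k : ℤ) = ⌈1 / ε⌉ :=
    ⟨_, Int.toNat_of_nonneg (Int.ceil_nonneg (by positivity))⟩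
  have hk1 : 1 ≤ k := by have := Int.ceil_pos.2 (show 0 < 1 / ε by positivity); omega
  have hopt : 2 * k * (2 * k) = 4 * (k * k) := by ring
  have hG : 4 * k * (2 * k) - 3 * k = Ik.unitPrice k 0 + Ik.unitPrice k 1 := by
    rw [Ik.unitPrice_add hk1]; ring_nf
  refine ⟨k, 2 * k, hk, rfl, Ik.votes k, fun v n => Ik.unitPrice k v * n, 0,
    fun _ => mul_zero _, fun _ => monotone_id.const_mul' _, ?_, ?_, ?_⟩
  · rw [hopt]; exact Ik.isLeast_cost_wins hk1
  · intro buy2 hbuy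
    rw [hG]
    have h := hbuy (fun _ => 0)
    simp only [add_zero, zero_add, mul_zero, Nat.sub_zero] at h
    exact Ik.cost_greedy hk1 _ (fun ℓ => (h ℓ).1)
      (fun ℓ w hw => (score_borda_le_iff (4 * k + 1)).1 ((h ℓ).2.1 w hw))
      (fun ℓ w hw he => (h ℓ).2.2 w hw ((score_borda_eq_iff (4 * k + 1)).2 he))
  · have hx : 1 / ε ≤ (k : ℚ) := by exact_mod_cast hk ▸ Int.le_ceil (1 / ε)
    rw [ge_iff_le, Nat.cast_sub (by nlinarith)]
    push_cast
    linarith [two_sub_mul_le hε hx]
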